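/- arXiv:1201.2654 — 4 statements merged into one kernel-verified Lean document; each statement's English description precedes it below -/
import Mathlib

section
/- If S is a finite set of integers such that the absolute difference of any two distinct elements of S lies in {3, 4, 5, 7, 8, 9}, then S has at most 3 elements. -/
/-!
List four notes in increasing order. The three consecutive gaps are each at least 3, yet the
outer interval is at most 9, so every gap is exactly 3; but then the first and third notes are
6 semitones apart, which is not a harmonic interval.
-/

abbrev harmonicIntervals : Finset ℤ := {3, 4, 5, 7, 8, 9}

lemma false_of_harmonic_differences {a b c d : ℤ} (hab : b - a ∈ harmonicIntervals)
    (hbc : c - b ∈ harmonicIntervals) (hcd : d - c ∈ harmonicIntervals)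
    (had : d - a ∈ harmonicIntervals) (hac : c - a ∈ harmonicIntervals) : False := by
  simp only [harmonicIntervals, Finset.mem_insert, Finset.mem_singleton] at hab hbc hcd had hac
  omega

/-- If S is a finite set of integers such that the absolute difference
of any two distinct elements of S lies in {3, 4, 5, 7, 8, 9}, then S has at most
3 elements. -/
theorem stmt_1 (S : Finset ℤ)
    (h : ∀ a ∈ S, ∀ b ∈ S, a ≠ b → |a - b| ∈ ({3, 4, 5, 7, 8, 9} : Finset ℤ)) :
    S.card ≤ 3 := by
  by_contra! hcard
  obtain ⟨T, hTS, hT⟩ := S.exists_subset_card_eq hcard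
  set f := T.orderEmbOfFin hT
  have gap (i j : Fin 4) (hij : i < j) : f j - f i ∈ harmonicIntervals := by
    have hlt : f i < f j := f.strictMono hij
    rw [← abs_of_pos (sub_pos.mpr hlt)]
    exact h _ (hTS (T.orderEmbOfFin_mem hT j)) _ (hTS (T.orderEmbOfFin_mem hT i)) hlt.ne'
  exact false_of_harmonic_differences (gap 0 1 (by decide)) (gap 1 2 (by decide))
    (gap 2 3 (by decide)) (gap 0 3 (by decide)) (gap 0 2 (by decide))
end

section
/- For integers a < b < c < d, the set {a, b, c, d} has all pairwise differences in {3, 4, 5, 6, 7, 8, 9} if and only if b − a = c − b = d − c = 3 (i.e., the set is an arithmetic progression with common difference 3, a diminished-seventh chord). -/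
/-- For integers a < b < c < d, the set {a, b, c, d} has all pairwise
differences in {3, 4, 5, 6, 7, 8, 9} iff b − a = c − b = d − c = 3. -/
theorem stmt_4 (a b c d : ℤ) (hab : a < b) (hbc : b < c) (hcd : c < d) :
    (b - a ∈ ({3, 4, 5, 6, 7, 8, 9} : Finset ℤ) ∧
     c - b ∈ ({3, 4, 5, 6, 7, 8, 9} : Finset ℤ) ∧
     d - c ∈ ({3, 4, 5, 6, 7, 8, 9} : Finset ℤ) ∧
     c - a ∈ ({3, 4, 5, 6, 7, 8, 9} : Finset ℤ) ∧
     d - b ∈ ({3, 4, 5, 6, 7, 8, 9} : Finset ℤ) ∧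
     d - a ∈ ({3, 4, 5, 6, 7, 8, 9} : Finset ℤ)) ↔
    (b - a = 3 ∧ c - b = 3 ∧ d - c = 3) := by
  simp only [Finset.mem_insert, Finset.mem_singleton]
  constructor
  · rintro ⟨h1, h2, h3, h4, h5, h6⟩
    omega
  · rintro ⟨h1, h2, h3⟩
    omega
end

section
/- Among all 6-element subsets of ZMod 12, the maximum possible number of chords (3-element subsets with all pairwise differences in {3, 4, 5, 7, 8, 9} ⊆ ZMod 12) is exactly 8, and it is attained by the set {0, 1, 4, 5, 8, 9}. -/
/-- The set of harmonic intervals in ZMod 12. -/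
def harmonicSet : Finset (ZMod 12) := {3, 4, 5, 7, 8, 9}

/-- The number of 3-element subsets of S that are chords, i.e. whose elements are
pairwise at harmonic intervals. -/
def chordCount (S : Finset (ZMod 12)) : ℕ :=
  ((S.powersetCard 3).filter (fun c => ∀ x ∈ c, ∀ y ∈ c, x ≠ y → x - y ∈ harmonicSet)).card

/-!
Reduction mod 4 splits `ZMod 12` into the four augmented triads `{v, v + 4, v + 8}`. Every chord is
an augmented triad, a major triad `{x, x + 4, x + 7}` or a minor triad `{x, x + 3, x + 7}`. A major
triad with root `x` consists of the major third `{x, x + 4}`, lying in the fiber of `x mod 4`,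
and the note `x + 7`, lying in the previous fiber; the root is recovered from either part. So if
`S` has `a v` notes in fiber `v`, it contains at most `min (choose (a v) 2) (a (v - 1))` major
triads rooted in that fiber, and dually for minor triads. Maximising the resulting bound over the
fiber sizes (`a v ≤ 3`, `∑ a v = 6`) gives 8, attained by two adjacent full fibers such as
`{0, 4, 8} ∪ {1, 5, 9}`.
-/

open Finset

section Triad

variable {G : Type*} [AddCommSemigroup G] [DecidableEq G]

def triad (a b x : G) : Finset G := {x, x + a, x + b}

lemma image_add_triad (a b x r : G) : (triad a b r).image (x + ·) = triad a b (x + r) := by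
  simp [triad, image_insert, add_assoc]

end Triad

abbrev augmentedTriad : ZMod 12 → Finset (ZMod 12) := triad 4 8
abbrev majorTriad : ZMod 12 → Finset (ZMod 12) := triad 4 7
abbrev minorTriad : ZMod 12 → Finset (ZMod 12) := triad 3 7

lemma exists_triad_of_mem_harmonicSet : ∀ d ∈ harmonicSet, ∀ e ∈ harmonicSet, e - d ∈ harmonicSet →
    ∃ r, ({0, d, e} : Finset (ZMod 12)) = augmentedTriad r ∨ {0, d, e} = majorTriad r ∨
      {0, d, e} = minorTriad r := by
  decide

lemma exists_triad_of_pairwise_harmonic {c : Finset (ZMod 12)} (hc : c.card = 3)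
    (hchord : ∀ x ∈ c, ∀ y ∈ c, x ≠ y → x - y ∈ harmonicSet) :
    ∃ r, c = augmentedTriad r ∨ c = majorTriad r ∨ c = minorTriad r := by
  obtain ⟨x, y, z, hxy, hxz, hyz, rfl⟩ := card_eq_three.1 hc
  have hyx := hchord y (by simp) x (by simp) hxy.symm
  have hzx := hchord z (by simp) x (by simp) hxz.symm
  have hzy : (z - x) - (y - x) ∈ harmonicSet := by
    simpa using hchord z (by simp) y (by simp) hyz.symm
  obtain ⟨r, hr⟩ := exists_triad_of_mem_harmonicSet _ hyx _ hzx hzy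
  have htranslate :
      ({x, y, z} : Finset (ZMod 12)) = ({0, y - x, z - x} : Finset _).image (x + ·) := by
    simp [image_insert]
  refine ⟨x + r, ?_⟩
  simp only [htranslate, ← image_add_triad]
  rcases hr with h | h | h <;> simp [h]

def mod4 : ZMod 12 →+* ZMod 4 := ZMod.castHom (by norm_num) _

def fiber (v : ZMod 4) : Finset (ZMod 12) := {x | mod4 x = v}

@[simp]
lemma mem_fiber {v : ZMod 4} {x : ZMod 12} : x ∈ fiber v ↔ mod4 x = v := by
  simp [fiber]

lemma augmentedTriad_eq_fiber : ∀ x, augmentedTriad x = fiber (mod4 x) := by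
  decide

lemma card_fiber : ∀ v, #(fiber v) = 3 := by
  decide

lemma mod4_add_four (x : ZMod 12) : mod4 (x + 4) = mod4 x := by
  rw [map_add, show mod4 4 = 0 by decide, add_zero]

lemma mod4_add_seven (x : ZMod 12) : mod4 (x + 7) = mod4 x - 1 := by
  rw [map_add, show mod4 7 = -1 by decide, sub_eq_add_neg]

lemma mod4_add_three (x : ZMod 12) : mod4 (x + 3) = mod4 x - 1 := by
  rw [map_add, show mod4 3 = -1 by decide, sub_eq_add_neg]

lemma card_filter_mod4_le (S : Finset (ZMod 12)) (v : ZMod 4) : #{x ∈ S | mod4 x = v} ≤ 3 :=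
  card_fiber v ▸ card_le_card fun _ hx => mem_fiber.2 (mem_filter.1 hx).2

lemma card_filter_mod4_eq_three_of_subset {S : Finset (ZMod 12)} {v : ZMod 4}
    (hv : fiber v ⊆ S) : #{x ∈ S | mod4 x = v} = 3 := by
  refine le_antisymm (card_filter_mod4_le S v) ?_
  calc 3 = #(fiber v) := (card_fiber v).symm
    _ ≤ _ := card_le_card fun x hx => mem_filter.2 ⟨hv hx, mem_fiber.1 hx⟩

lemma card_filter_eq_sum_mod4 (p : ZMod 12 → Prop) [DecidablePred p] :
    #{x | p x} = ∑ v, #{x | p x ∧ mod4 x = v} := by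
  rw [card_eq_sum_card_fiberwise (f := mod4) (t := univ) fun _ _ => mem_univ _]
  simp only [filter_filter]

lemma majorThird_injective :
    Function.Injective fun x : ZMod 12 => ({x, x + 4} : Finset (ZMod 12)) := by
  decide

lemma card_majorTriad_roots_le (S : Finset (ZMod 12)) (v : ZMod 4) :
    #{x | majorTriad x ⊆ S ∧ mod4 x = v} ≤
      min ((#{x ∈ S | mod4 x = v}).choose 2) #{x ∈ S | mod4 x = v - 1} := by
  refine le_min ?_ ?_
  · rw [← card_powersetCard]
    refine card_le_card_of_injOn (fun x => {x, x + 4}) (fun x hx => ?_) majorThird_injective.injOn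
    simp only [mem_coe, mem_filter, majorTriad, triad, insert_subset_iff,
      singleton_subset_iff] at hx
    obtain ⟨-, ⟨h0, h4, -⟩, rfl⟩ := hx
    rw [mem_coe, mem_powersetCard, card_pair (by simp; decide)]
    simp [insert_subset_iff, h0, h4, mod4_add_four]
  · refine card_le_card_of_injOn (· + 7) (fun x hx => ?_) (add_left_injective 7).injOn
    simp only [mem_coe, mem_filter, majorTriad, triad, insert_subset_iff,
      singleton_subset_iff] at hx
    obtain ⟨-, ⟨-, -, h7⟩, rfl⟩ := hx
    simp [h7, mod4_add_seven]

lemma card_minorTriad_roots_le (S : Finset (ZMod 12)) (v : ZMod 4) :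
    #{x | minorTriad x ⊆ S ∧ mod4 x = v} ≤
      min #{x ∈ S | mod4 x = v} ((#{x ∈ S | mod4 x = v - 1}).choose 2) := by
  refine le_min ?_ ?_
  · refine card_le_card_of_injOn id (fun x hx => ?_) Function.injective_id.injOn
    simp only [mem_coe, mem_filter, minorTriad, triad, insert_subset_iff,
      singleton_subset_iff] at hx
    obtain ⟨-, ⟨h0, -, -⟩, rfl⟩ := hx
    simp [h0]
  · rw [← card_powersetCard]
    refine card_le_card_of_injOn (fun x => {x + 3, x + 3 + 4}) (fun x hx => ?_)
      (majorThird_injective.comp (add_left_injective 3)).injOn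
    simp only [mem_coe, mem_filter, minorTriad, triad, insert_subset_iff,
      singleton_subset_iff] at hx
    obtain ⟨-, ⟨-, h3, h7⟩, rfl⟩ := hx
    rw [mem_coe, mem_powersetCard, card_pair (by simp; decide)]
    simp [insert_subset_iff, show x + 3 + 4 = x + 7 by ring, h3, h7, mod4_add_three, mod4_add_seven]

lemma chordCount_le (S : Finset (ZMod 12)) :
    chordCount S ≤ #{v | fiber v ⊆ S} + #{x | majorTriad x ⊆ S} + #{x | minorTriad x ⊆ S} := by
  calc chordCount S
      ≤ #(({v | fiber v ⊆ S} : Finset (ZMod 4)).image fiber ∪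
          ({x | majorTriad x ⊆ S} : Finset (ZMod 12)).image majorTriad ∪
          ({x | minorTriad x ⊆ S} : Finset (ZMod 12)).image minorTriad) := by
        refine card_le_card fun c hc => ?_
        obtain ⟨hcS, hc3⟩ := mem_powersetCard.1 (mem_filter.1 hc).1
        obtain ⟨r, rfl | rfl | rfl⟩ := exists_triad_of_pairwise_harmonic hc3 (mem_filter.1 hc).2
        · rw [augmentedTriad_eq_fiber] at hcS ⊢
          exact mem_union_left _
            (mem_union_left _ (mem_image_of_mem _ (mem_filter.2 ⟨mem_univ _, hcS⟩)))
        · exact mem_union_left _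
            (mem_union_right _ (mem_image_of_mem _ (mem_filter.2 ⟨mem_univ _, hcS⟩)))
        · exact mem_union_right _ (mem_image_of_mem _ (mem_filter.2 ⟨mem_univ _, hcS⟩))
    _ ≤ _ := (card_union_le _ _).trans
          (add_le_add ((card_union_le _ _).trans (add_le_add card_image_le card_image_le))
            card_image_le)

lemma triad_bound_le_eight (a : ZMod 4 → ℕ) (ha : ∀ v, a v ≤ 3) (hsum : ∑ v, a v = 6) :
    #{v | a v = 3} + ∑ v, min ((a v).choose 2) (a (v - 1)) +
      ∑ v, min (a v) ((a (v - 1)).choose 2) ≤ 8 := by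
  have huniv : (univ : Finset (ZMod 4)) = {0, 1, 2, 3} := rfl
  rw [card_filter]
  simp only [huniv, sum_insert (show (0 : ZMod 4) ∉ ({1, 2, 3} : Finset _) by decide),
    sum_insert (show (1 : ZMod 4) ∉ ({2, 3} : Finset _) by decide),
    sum_insert (show (2 : ZMod 4) ∉ ({3} : Finset _) by decide), sum_singleton] at hsum ⊢
  simp only [show (0 : ZMod 4) - 1 = 3 from rfl, sub_self, show (2 : ZMod 4) - 1 = 1 from rfl,
    show (3 : ZMod 4) - 1 = 2 from rfl]
  have := ha 0; have := ha 1; have := ha 2; have := ha 3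
  generalize a 0 = a0, a 1 = a1, a 2 = a2, a 3 = a3 at *
  interval_cases a0 <;> interval_cases a1 <;> interval_cases a2 <;> interval_cases a3 <;>
    first | omega | decide

/-- Among all 6-element subsets of ZMod 12, the maximum possible number
of chords is exactly 8, attained by {0, 1, 4, 5, 8, 9}. -/
theorem stmt_13 :
    (∀ S : Finset (ZMod 12), S.card = 6 → chordCount S ≤ 8) ∧
    ({0, 1, 4, 5, 8, 9} : Finset (ZMod 12)).card = 6 ∧
    chordCount ({0, 1, 4, 5, 8, 9} : Finset (ZMod 12)) = 8 := by
  refine ⟨fun S hS => ?_, by decide, by decide⟩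
  have hsum : ∑ v, #{x ∈ S | mod4 x = v} = 6 :=
    hS ▸ (card_eq_sum_card_fiberwise fun _ _ => mem_univ _).symm
  calc chordCount S
      ≤ #{v | fiber v ⊆ S} + #{x | majorTriad x ⊆ S} + #{x | minorTriad x ⊆ S} := chordCount_le S
    _ ≤ #{v | #{x ∈ S | mod4 x = v} = 3} +
          ∑ v, min ((#{x ∈ S | mod4 x = v}).choose 2) #{x ∈ S | mod4 x = v - 1} +
          ∑ v, min #{x ∈ S | mod4 x = v} ((#{x ∈ S | mod4 x = v - 1}).choose 2) := by
      rw [card_filter_eq_sum_mod4, card_filter_eq_sum_mod4]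
      gcongr with v
      · exact card_filter_mod4_eq_three_of_subset
      · exact card_majorTriad_roots_le S v
      · exact card_minorTriad_roots_le S v
    _ ≤ 8 := triad_bound_le_eight _ (card_filter_mod4_le S) hsum
end

section
/- Among all 9-element subsets of ZMod 12, the maximum possible number of chords (3-element subsets with all pairwise differences in {3, 4, 5, 7, 8, 9} ⊆ ZMod 12) is exactly 15. -/
/-!
Only the complement of a 9-note scale matters: it is a set of three tones, and a chord lies in the
scale iff it avoids all three. There are 28 chords (12 major triads, 12 minor triads, 4 augmented
triads); every tone lies in 7 of them and two tones share at most 3, namely when they are a major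
third apart (two triads and an augmented triad). By inclusion–exclusion, removing three tones
destroys at least `21 - 9 + 1 = 13` chords, with equality when the three tones form an augmented
triad, as for the scale `{0, 1, 2, 4, 5, 6, 8, 9, 10}` missing `{3, 7, 11}`.
-/

open Finset

/-- Major triads `{r, r + 4, r + 7}`, minor triads `{r, r + 3, r + 7}` and augmented triads
`{r, r + 4, r + 8}`, listed by their smallest representatives. -/
def chords : Finset (Finset (ZMod 12)) :=
  {{0, 4, 7}, {1, 5, 8}, {2, 6, 9}, {3, 7, 10}, {4, 8, 11}, {0, 5, 9}, {1, 6, 10}, {2, 7, 11},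
   {0, 3, 8}, {1, 4, 9}, {2, 5, 10}, {3, 6, 11},
   {0, 3, 7}, {1, 4, 8}, {2, 5, 9}, {3, 6, 10}, {4, 7, 11}, {0, 5, 8}, {1, 6, 9}, {2, 7, 10},
   {3, 8, 11}, {0, 4, 9}, {1, 5, 10}, {2, 6, 11},
   {0, 4, 8}, {1, 5, 9}, {2, 6, 10}, {3, 7, 11}}

theorem chords_eq_filter :
    chords = (univ.powersetCard 3).filter
      fun c => ∀ x ∈ c, ∀ y ∈ c, x ≠ y → x - y ∈ harmonicSet := by
  decide

theorem chordCount_eq_card_filter_subset (S : Finset (ZMod 12)) :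
    chordCount S = #{c ∈ chords | c ⊆ S} := by
  rw [chordCount, chords_eq_filter, filter_filter]
  congr 1
  ext c
  simp only [mem_filter, mem_powersetCard, subset_univ, true_and]
  tauto

theorem card_chords_avoiding_le :
    ∀ a b c : ZMod 12, a ≠ b → a ≠ c → b ≠ c → #{ch ∈ chords | a ∉ ch ∧ b ∉ ch ∧ c ∉ ch} ≤ 15 := by
  decide

theorem card_chords_disjoint_le {T : Finset (ZMod 12)} (hT : #T = 3) :
    #{c ∈ chords | Disjoint c T} ≤ 15 := by
  obtain ⟨a, b, c, hab, hac, hbc, rfl⟩ := card_eq_three.1 hT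
  simpa only [disjoint_insert_right, disjoint_singleton_right] using
    card_chords_avoiding_le a b c hab hac hbc

theorem chordCount_le_of_card_eq_nine {S : Finset (ZMod 12)} (hS : #S = 9) : chordCount S ≤ 15 := by
  have h : ∀ c, c ⊆ S ↔ Disjoint c Sᶜ := fun c => disjoint_compl_right_iff.symm
  rw [chordCount_eq_card_filter_subset]
  simp_rw [h]
  exact card_chords_disjoint_le (by rw [card_compl, hS]; rfl)

/-- Among all 9-element subsets of ZMod 12, the maximum possible number
of chords is exactly 15. -/
theorem stmt_15 :
    IsGreatest {n : ℕ | ∃ S : Finset (ZMod 12), S.card = 9 ∧ chordCount S = n} 15 := by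
  refine ⟨⟨{0, 1, 2, 4, 5, 6, 8, 9, 10}, by decide, by decide⟩, ?_⟩
  rintro n ⟨S, hS, rfl⟩
  exact chordCount_le_of_card_eq_nine hS
end
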